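/- arXiv:1910.03260 — 8 statements merged into one kernel-verified Lean document; each statement's English description precedes it below -/
import Mathlib

section
/- Let ψ : ℝ → ℝ be any function, 0 < α < β and y₀ ∈ ℝ. If y^α is a minimizer over ℝ of t ↦ ψ(t) + α(t − y₀)² and y^β is a minimizer over ℝ of t ↦ ψ(t) + β(t − y₀)², then |y^α − y₀| ≥ |y^β − y₀| and (y^α − y^β)·(y^α − y₀) ≥ 0 (i.e. y^α − y^β has the same sign as y^α − y₀). -/
/-- If `y^α` minimizes `t ↦ ψ t + α (t - y₀)²` and `y^β` minimizes
`t ↦ ψ t + β (t - y₀)²` with `0 < α < β`, then `|y^α - y₀| ≥ |y^β - y₀|` and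
`(y^α - y^β)(y^α - y₀) ≥ 0`. -/
theorem stmt_1 (ψ : ℝ → ℝ) (α β : ℝ) (hα : 0 < α) (hαβ : α < β) (y₀ yα yβ : ℝ)
    (hmα : ∀ t : ℝ, ψ yα + α * (yα - y₀) ^ 2 ≤ ψ t + α * (t - y₀) ^ 2)
    (hmβ : ∀ t : ℝ, ψ yβ + β * (yβ - y₀) ^ 2 ≤ ψ t + β * (t - y₀) ^ 2) :
    |yβ - y₀| ≤ |yα - y₀| ∧ 0 ≤ (yα - yβ) * (yα - y₀) := by
  have h1 := hmα yβ
  have h2 := hmβ yα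
  have hsq : (yβ - y₀) ^ 2 ≤ (yα - y₀) ^ 2 := by nlinarith
  constructor
  · exact sq_le_sq.mp hsq
  · nlinarith [sq_nonneg (yα - yβ)]
end

section
/- Let ε, τ, a > 0 and x ∈ εℤ. If τ/a ∉ ε(ℤ + 1/2), then the function u ↦ −u + a(u − x)²/(2τ) has a unique minimizer over the set εℤ, namely x + ε⌊τ/(εa) + 1/2⌋; if instead τ/a ∈ ε(ℤ + 1/2), then it has exactly two minimizers over εℤ, namely x + τ/a − ε/2 and x + τ/a + ε/2. -/
private lemma aux1 (t : ℝ) (r : ℤ) (hr1 : t - 1/2 < r) (hr2 : (r:ℝ) < t + 1/2)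
    (j : ℤ) (hj : j ≠ r) : ((r:ℝ) - t)^2 < ((j:ℝ) - t)^2 := by
  rcases lt_or_gt_of_ne hj with h | h
  · have hj' : (j:ℝ) + 1 ≤ r := by exact_mod_cast h
    nlinarith [mul_pos (by linarith : (0:ℝ) < (r:ℝ) - j) (by linarith : (0:ℝ) < 2*t - j - r)]
  · have hj' : (r:ℝ) + 1 ≤ j := by exact_mod_cast h
    nlinarith [mul_pos (by linarith : (0:ℝ) < (j:ℝ) - r) (by linarith : (0:ℝ) < j + r - 2*t)]

private lemma aux2a (k j : ℤ) : (1/4 : ℝ) ≤ ((j:ℝ) - ((k:ℝ) + 1/2))^2 := by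
  rcases le_or_gt j k with h | h
  · have : (j:ℝ) ≤ k := by exact_mod_cast h
    nlinarith
  · have : (k:ℝ) + 1 ≤ j := by exact_mod_cast h
    nlinarith

private lemma aux2b (k j : ℤ) (h : ((j:ℝ) - ((k:ℝ) + 1/2))^2 ≤ 1/4) : j = k ∨ j = k + 1 := by
  by_contra hc
  push_neg at hc
  obtain ⟨h1, h2⟩ := hc
  rcases le_or_gt j k with h' | h'
  · have hle : j ≤ k - 1 := by omega
    have : (j:ℝ) ≤ (k:ℝ) - 1 := by exact_mod_cast hle
    nlinarith
  · have hge : k + 2 ≤ j := by omega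
    have : (k:ℝ) + 2 ≤ j := by exact_mod_cast hge
    nlinarith

/-- Minimizers of `u ↦ -u + a (u - x)²/(2τ)` over the lattice `εℤ`: if
`τ/a ∉ ε(ℤ + 1/2)` the unique minimizer is `x + ε⌊τ/(εa) + 1/2⌋`; otherwise there
are exactly the two minimizers `x + τ/a ∓ ε/2`. -/
theorem stmt_2 (ε τ a : ℝ) (hε : 0 < ε) (hτ : 0 < τ) (ha : 0 < a)
    (x : ℝ) (hx : ∃ k : ℤ, x = ε * k) :
    ((¬ ∃ k : ℤ, τ / a = ε * ((k : ℝ) + 1 / 2)) →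
      {y : ℝ | (∃ k : ℤ, y = ε * k) ∧ ∀ u : ℝ, (∃ k : ℤ, u = ε * k) →
          -y + a * (y - x) ^ 2 / (2 * τ) ≤ -u + a * (u - x) ^ 2 / (2 * τ)}
        = {x + ε * (⌊τ / (ε * a) + 1 / 2⌋ : ℤ)}) ∧
    ((∃ k : ℤ, τ / a = ε * ((k : ℝ) + 1 / 2)) →
      {y : ℝ | (∃ k : ℤ, y = ε * k) ∧ ∀ u : ℝ, (∃ k : ℤ, u = ε * k) →
          -y + a * (y - x) ^ 2 / (2 * τ) ≤ -u + a * (u - x) ^ 2 / (2 * τ)}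
        = {x + τ / a - ε / 2, x + τ / a + ε / 2}) := by
  obtain ⟨k₀, hk₀⟩ := hx
  have hane : a ≠ 0 := ne_of_gt ha
  have hτne : τ ≠ 0 := ne_of_gt hτ
  have hεne : ε ≠ 0 := ne_of_gt hε
  set t : ℝ := τ / (ε * a) with ht
  have hta : τ / a = ε * t := by rw [ht]; field_simp
  set m : ℝ := x + τ / a with hm
  have key : ∀ y u : ℝ, (-y + a * (y - x) ^ 2 / (2 * τ) ≤ -u + a * (u - x) ^ 2 / (2 * τ))
      ↔ (y - m)^2 ≤ (u - m)^2 := by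
    intro y u
    have h1 : ∀ w : ℝ, -w + a * (w - x) ^ 2 / (2 * τ)
        = (a / (2 * τ)) * (w - m)^2 + (-x - τ / (2 * a)) := by
      intro w
      rw [hm]
      field_simp
      ring
    rw [h1 y, h1 u]
    have hc : 0 < a / (2 * τ) := by positivity
    constructor
    · intro h
      by_contra hcon
      push_neg at hcon
      have h2 := mul_lt_mul_of_pos_left hcon hc
      linarith
    · intro h
      have h2 := mul_le_mul_of_nonneg_left h hc.le
      linarith
  constructor
  · intro hnot
    set r : ℤ := ⌊t + 1/2⌋ with hr
    have hr2 : (r:ℝ) ≤ t + 1/2 := Int.floor_le _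
    have hr1 : t + 1/2 < r + 1 := Int.lt_floor_add_one _
    have hr2' : (r:ℝ) < t + 1/2 := by
      rcases lt_or_eq_of_le hr2 with h | h
      · exact h
      · exact absurd ⟨r - 1, by push_cast; rw [hta, h]; ring⟩ hnot
    have hr1' : t - 1/2 < r := by linarith
    ext y
    simp only [Set.mem_setOf_eq, Set.mem_singleton_iff]
    constructor
    · rintro ⟨⟨k, hk⟩, hmin⟩
      have hu : ∃ j : ℤ, x + ε * (r:ℝ) = ε * j := ⟨k₀ + r, by rw [hk₀]; push_cast; ring⟩
      have h := (key y _).mp (hmin _ hu)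
      have hy : y - m = ε * ((k:ℝ) - k₀ - t) := by rw [hk, hm, hk₀, hta]; ring
      have hu' : x + ε * (r:ℝ) - m = ε * ((r:ℝ) - t) := by rw [hm, hta]; ring
      rw [hy, hu'] at h
      have hk' : k - k₀ = r := by
        by_contra hne
        have h2 := aux1 t r hr1' hr2' (k - k₀) hne
        push_cast at h2
        nlinarith [mul_pos hε hε]
      have hkk : k = k₀ + r := by omega
      rw [hk, hkk, hk₀]; push_cast; ring
    · intro hy
      refine ⟨⟨k₀ + r, by rw [hy, hk₀]; push_cast; ring⟩, ?_⟩
      rintro u ⟨j, hj⟩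
      rw [key]
      have hy' : y - m = ε * ((r:ℝ) - t) := by rw [hy, hm, hta]; ring
      have hu' : u - m = ε * ((j:ℝ) - k₀ - t) := by rw [hj, hm, hk₀, hta]; ring
      rw [hy', hu']
      rcases eq_or_ne (j - k₀) r with h | h
      · have hje : ((j:ℝ) - k₀ : ℝ) = r := by exact_mod_cast h
        rw [show ((j:ℝ) - k₀ - t) = (r:ℝ) - t by rw [← hje]]
      · have h2 := aux1 t r hr1' hr2' (j - k₀) h
        push_cast at h2
        nlinarith [mul_pos hε hε]
  · rintro ⟨k, hkh⟩
    have htk : t = (k:ℝ) + 1/2 := by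
      have := hta.symm.trans hkh
      exact mul_left_cancel₀ hεne this
    ext y
    simp only [Set.mem_setOf_eq, Set.mem_insert_iff, Set.mem_singleton_iff]
    constructor
    · rintro ⟨⟨k', hk'⟩, hmin⟩
      have hu : ∃ j : ℤ, x + τ / a - ε / 2 = ε * j :=
        ⟨k₀ + k, by rw [hk₀, hta, htk]; push_cast; ring⟩
      have h := (key y _).mp (hmin _ hu)
      have hy : y - m = ε * ((k':ℝ) - k₀ - t) := by rw [hk', hm, hk₀, hta]; ring
      have hu' : x + τ / a - ε / 2 - m = ε * (-(1/2)) := by rw [hm]; ring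
      rw [hy, hu'] at h
      have hsq : ((k':ℝ) - k₀ - t)^2 ≤ 1/4 := by nlinarith [mul_pos hε hε]
      rw [htk] at hsq
      have h2 := aux2b k (k' - k₀) (by push_cast; nlinarith)
      rcases h2 with h2 | h2
      · left
        have hkk : k' = k₀ + k := by omega
        rw [hk', hkk, hm, hk₀, hta, htk]; push_cast; ring
      · right
        have hkk : k' = k₀ + k + 1 := by omega
        rw [hk', hkk, hm, hk₀, hta, htk]; push_cast; ring
    · intro hy
      have hym : (y - m)^2 = (ε/2)^2 := by
        rcases hy with hy | hy <;> rw [hy, hm] <;> ring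
      have hmem : ∃ j : ℤ, y = ε * j := by
        rcases hy with hy | hy
        · exact ⟨k₀ + k, by rw [hy, hm, hk₀, hta, htk]; push_cast; ring⟩
        · exact ⟨k₀ + k + 1, by rw [hy, hm, hk₀, hta, htk]; push_cast; ring⟩
      refine ⟨hmem, ?_⟩
      rintro u ⟨j, hj⟩
      rw [key, hym]
      have hu' : u - m = ε * ((j:ℝ) - k₀ - t) := by rw [hj, hm, hk₀, hta]; ring
      rw [hu']
      have h2 := aux2a k (j - k₀)
      push_cast at h2
      rw [htk]
      nlinarith [mul_pos hε hε]
end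

section
/- Let 0 < α < β, γ > 0 with 1/α ∉ γ(ℤ + 1/2) and 1/β ∉ γ(ℤ + 1/2), and set k_α = ⌊1/(αγ) + 1/2⌋ and k_β = ⌊1/(βγ) + 1/2⌋. For τ > 0 and ε = γτ, let (u_n) be the discrete orbit u₀ = 0, u_n = u_{n−1} + ε⌊τ/(ε a_n) + 1/2⌋ with a_n = α for n odd and a_n = β for n even. Then u_n = ⌈n/2⌉ k_α ε + ⌊n/2⌋ k_β ε for every n ≥ 0, and for every t ≥ 0 the value u_{⌈t/τ⌉} converges, as τ → 0, to γ((k_α + k_β)/2)·t. -/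
open Filter

/-- Critical regime `ε = γτ` with 2-periodic perturbations alternating between `α`
and `β`: the discrete orbit is `u_n = ⌈n/2⌉ k_α ε + ⌊n/2⌋ k_β ε`, and the
interpolations converge, as `τ → 0⁺`, to the linear motion `t ↦ γ ((k_α+k_β)/2) t`. -/
theorem stmt_5 (α β γ : ℝ) (hα : 0 < α) (hαβ : α < β) (hγ : 0 < γ)
    (hnα : ¬ ∃ k : ℤ, 1 / α = γ * ((k : ℝ) + 1 / 2))
    (hnβ : ¬ ∃ k : ℤ, 1 / β = γ * ((k : ℝ) + 1 / 2))
    (kα kβ : ℤ) (hkα : kα = ⌊1 / (α * γ) + 1 / 2⌋) (hkβ : kβ = ⌊1 / (β * γ) + 1 / 2⌋)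
    (a : ℕ → ℝ) (haodd : ∀ n : ℕ, Odd n → a n = α) (haeven : ∀ n : ℕ, Even n → a n = β)
    (u : ℝ → ℕ → ℝ)
    (hu0 : ∀ τ : ℝ, 0 < τ → u τ 0 = 0)
    (hu : ∀ τ : ℝ, 0 < τ → ∀ n : ℕ,
      u τ (n + 1) = u τ n + (γ * τ) * (⌊τ / ((γ * τ) * a (n + 1)) + 1 / 2⌋ : ℤ)) :
    (∀ τ : ℝ, 0 < τ → ∀ n : ℕ,
      u τ n = (((n + 1) / 2 : ℕ) : ℝ) * (kα : ℝ) * (γ * τ)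
        + ((n / 2 : ℕ) : ℝ) * (kβ : ℝ) * (γ * τ)) ∧
    (∀ t : ℝ, 0 ≤ t →
      Tendsto (fun τ : ℝ => u τ ⌈t / τ⌉₊) (nhdsWithin 0 (Set.Ioi 0))
        (nhds (γ * (((kα : ℝ) + (kβ : ℝ)) / 2) * t))) := by
  have hβ : 0 < β := hα.trans hαβ
  have hform : ∀ τ : ℝ, 0 < τ → ∀ n : ℕ,
      u τ n = (((n + 1) / 2 : ℕ) : ℝ) * (kα : ℝ) * (γ * τ)
        + ((n / 2 : ℕ) : ℝ) * (kβ : ℝ) * (γ * τ) := by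
    intro τ hτ n
    induction n with
    | zero => simp [hu0 τ hτ]
    | succ n ih =>
      rw [hu τ hτ n, ih]
      have hτne : τ ≠ 0 := ne_of_gt hτ
      have hγne : γ ≠ 0 := ne_of_gt hγ
      rcases Nat.even_or_odd (n + 1) with he | ho
      · -- step with β, n+1 even so n odd
        rw [haeven _ he]
        have hdiv : τ / ((γ * τ) * β) = 1 / (β * γ) := by
          field_simp
        rw [hdiv, ← hkβ]
        obtain ⟨m, hm⟩ := he
        have h1 : (n + 1 + 1) / 2 = (n + 1) / 2 := by omega
        have h2 : (n + 1) / 2 = n / 2 + 1 := by omega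
        rw [h1, h2]
        push_cast
        ring
      · -- step with α, n+1 odd so n even
        rw [haodd _ ho]
        have hdiv : τ / ((γ * τ) * α) = 1 / (α * γ) := by
          field_simp
        rw [hdiv, ← hkα]
        obtain ⟨m, hm⟩ := ho
        have h1 : (n + 1 + 1) / 2 = (n + 1) / 2 + 1 := by omega
        have h2 : (n + 1) / 2 = n / 2 := by omega
        rw [h1, h2]
        push_cast
        ring
  refine ⟨hform, ?_⟩
  intro t ht
  -- key limit: N τ * τ → t where N τ = ⌈t/τ⌉₊
  have hmem : ∀ᶠ τ : ℝ in nhdsWithin 0 (Set.Ioi 0), 0 < τ :=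
    eventually_nhdsWithin_of_forall (fun τ hτ => hτ)
  have hτ0 : Tendsto (fun τ : ℝ => τ) (nhdsWithin 0 (Set.Ioi 0)) (nhds 0) :=
    tendsto_nhdsWithin_of_tendsto_nhds tendsto_id
  have hA : Tendsto (fun τ : ℝ => (⌈t / τ⌉₊ : ℝ) * τ) (nhdsWithin 0 (Set.Ioi 0))
      (nhds t) := by
    have hlow : ∀ᶠ τ : ℝ in nhdsWithin 0 (Set.Ioi 0), t ≤ (⌈t / τ⌉₊ : ℝ) * τ := by
      filter_upwards [hmem] with τ hτ
      have := Nat.le_ceil (t / τ)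
      calc t = (t / τ) * τ := by field_simp
        _ ≤ (⌈t / τ⌉₊ : ℝ) * τ := by nlinarith
    have hhigh : ∀ᶠ τ : ℝ in nhdsWithin 0 (Set.Ioi 0),
        (⌈t / τ⌉₊ : ℝ) * τ ≤ t + τ := by
      filter_upwards [hmem] with τ hτ
      have h1 : (⌈t / τ⌉₊ : ℝ) < t / τ + 1 :=
        Nat.ceil_lt_add_one (div_nonneg ht hτ.le)
      have h2 : (t / τ + 1) * τ = t + τ := by field_simp
      nlinarith
    have hup : Tendsto (fun τ : ℝ => t + τ) (nhdsWithin 0 (Set.Ioi 0)) (nhds t) := by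
      have := (tendsto_const_nhds (x := t)).add hτ0
      simpa using this
    exact tendsto_of_tendsto_of_tendsto_of_le_of_le' tendsto_const_nhds hup hlow hhigh
  have hhalf : Tendsto (fun τ : ℝ => (⌈t / τ⌉₊ : ℝ) * τ / 2)
      (nhdsWithin 0 (Set.Ioi 0)) (nhds (t / 2)) := hA.div_const 2
  -- (N/2 : ℕ) * τ → t/2
  have hB : Tendsto (fun τ : ℝ => ((⌈t / τ⌉₊ / 2 : ℕ) : ℝ) * τ)
      (nhdsWithin 0 (Set.Ioi 0)) (nhds (t / 2)) := by
    have hlow : ∀ᶠ τ : ℝ in nhdsWithin 0 (Set.Ioi 0),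
        ((⌈t / τ⌉₊ : ℝ) * τ - τ) / 2 ≤ ((⌈t / τ⌉₊ / 2 : ℕ) : ℝ) * τ := by
      filter_upwards [hmem] with τ hτ
      set N := ⌈t / τ⌉₊
      have h : (N : ℝ) ≤ 2 * ((N / 2 : ℕ) : ℝ) + 1 := by
        have : N ≤ 2 * (N / 2) + 1 := by omega
        exact_mod_cast this
      nlinarith
    have hhigh : ∀ᶠ τ : ℝ in nhdsWithin 0 (Set.Ioi 0),
        ((⌈t / τ⌉₊ / 2 : ℕ) : ℝ) * τ ≤ (⌈t / τ⌉₊ : ℝ) * τ / 2 := by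
      filter_upwards [hmem] with τ hτ
      set N := ⌈t / τ⌉₊
      have h : 2 * ((N / 2 : ℕ) : ℝ) ≤ (N : ℝ) := by
        have : 2 * (N / 2) ≤ N := by omega
        exact_mod_cast this
      nlinarith
    have hlo : Tendsto (fun τ : ℝ => ((⌈t / τ⌉₊ : ℝ) * τ - τ) / 2)
        (nhdsWithin 0 (Set.Ioi 0)) (nhds (t / 2)) := by
      have := (hA.sub hτ0).div_const 2
      simpa using this
    exact tendsto_of_tendsto_of_tendsto_of_le_of_le' hlo hhalf hlow hhigh
  -- ((N+1)/2 : ℕ) * τ → t/2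
  have hC : Tendsto (fun τ : ℝ => (((⌈t / τ⌉₊ + 1) / 2 : ℕ) : ℝ) * τ)
      (nhdsWithin 0 (Set.Ioi 0)) (nhds (t / 2)) := by
    have hlow : ∀ᶠ τ : ℝ in nhdsWithin 0 (Set.Ioi 0),
        (⌈t / τ⌉₊ : ℝ) * τ / 2 ≤ (((⌈t / τ⌉₊ + 1) / 2 : ℕ) : ℝ) * τ := by
      filter_upwards [hmem] with τ hτ
      set N := ⌈t / τ⌉₊
      have h : (N : ℝ) ≤ 2 * (((N + 1) / 2 : ℕ) : ℝ) := by
        have : N ≤ 2 * ((N + 1) / 2) := by omega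
        exact_mod_cast this
      nlinarith
    have hhigh : ∀ᶠ τ : ℝ in nhdsWithin 0 (Set.Ioi 0),
        (((⌈t / τ⌉₊ + 1) / 2 : ℕ) : ℝ) * τ ≤ ((⌈t / τ⌉₊ : ℝ) * τ + τ) / 2 := by
      filter_upwards [hmem] with τ hτ
      set N := ⌈t / τ⌉₊
      have h : 2 * (((N + 1) / 2 : ℕ) : ℝ) ≤ (N : ℝ) + 1 := by
        have : 2 * ((N + 1) / 2) ≤ N + 1 := by omega
        exact_mod_cast this
      nlinarith
    have hhi : Tendsto (fun τ : ℝ => ((⌈t / τ⌉₊ : ℝ) * τ + τ) / 2)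
        (nhdsWithin 0 (Set.Ioi 0)) (nhds (t / 2)) := by
      have := (hA.add hτ0).div_const 2
      simpa using this
    exact tendsto_of_tendsto_of_tendsto_of_le_of_le' hhalf hhi hlow hhigh
  have hfinal : Tendsto
      (fun τ : ℝ => (γ * (kα : ℝ)) * ((((⌈t / τ⌉₊ + 1) / 2 : ℕ) : ℝ) * τ)
        + (γ * (kβ : ℝ)) * (((⌈t / τ⌉₊ / 2 : ℕ) : ℝ) * τ))
      (nhdsWithin 0 (Set.Ioi 0))
      (nhds ((γ * (kα : ℝ)) * (t / 2) + (γ * (kβ : ℝ)) * (t / 2))) :=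
    ((tendsto_const_nhds.mul hC).add (tendsto_const_nhds.mul hB))
  have heq : γ * (((kα : ℝ) + (kβ : ℝ)) / 2) * t
      = (γ * (kα : ℝ)) * (t / 2) + (γ * (kβ : ℝ)) * (t / 2) := by ring
  rw [heq]
  refine hfinal.congr' ?_
  filter_upwards [hmem] with τ hτ
  rw [hform τ hτ ⌈t / τ⌉₊]
  ring
end

section
/- Let 0 < α < β and for γ > 0 define 1/a^γ = (γ/2)(⌊1/(αγ) + 1/2⌋ + ⌊1/(βγ) + 1/2⌋). Then sup_{γ>0} 1/a^γ = 1/α if α ≤ β/2, and sup_{γ>0} 1/a^γ = 2/β if α ≥ β/2; the supremum is attained at γ = 2/α in the first case and at γ = 2/β in the second case. -/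
set_option maxHeartbeats 1000000 in
lemma bound1 (α β γ : ℝ) (hα : 0 < α) (hαβ : α < β) (h : α ≤ β / 2) (hγ : 0 < γ) :
    (γ / 2) * ((⌊1 / (α * γ) + 1 / 2⌋ : ℤ) + (⌊1 / (β * γ) + 1 / 2⌋ : ℤ) : ℝ) ≤ 1 / α := by
  have hβ : 0 < β := hα.trans hαβ
  have hag : 0 < α * γ := mul_pos hα hγ
  have hbg : 0 < β * γ := mul_pos hβ hγ
  set m := ⌊1 / (α * γ) + 1 / 2⌋ with hmdef
  set n := ⌊1 / (β * γ) + 1 / 2⌋ with hndef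
  have hm1 : (m : ℝ) ≤ 1 / (α * γ) + 1 / 2 := Int.floor_le _
  have hn1 : (n : ℝ) ≤ 1 / (β * γ) + 1 / 2 := Int.floor_le _
  have hn0 : 0 ≤ n := Int.floor_nonneg.mpr (by positivity)
  have hnm : n ≤ m := by
    apply Int.floor_le_floor
    have : 1 / (β * γ) ≤ 1 / (α * γ) := by
      apply one_div_le_one_div_of_le hag; nlinarith
    linarith
  have e1 : (1 / (α * γ)) * (α * γ) = 1 := one_div_mul_cancel hag.ne'
  have e2 : (1 / (β * γ)) * (β * γ) = 1 := one_div_mul_cancel hbg.ne'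
  have Hm : (m : ℝ) * (α * γ) ≤ 1 + (α * γ) / 2 := by
    nlinarith [mul_le_mul_of_nonneg_right hm1 hag.le]
  have Hn : (n : ℝ) * (β * γ) ≤ 1 + (β * γ) / 2 := by
    nlinarith [mul_le_mul_of_nonneg_right hn1 hbg.le]
  have hd : 2 * (α * γ) ≤ β * γ := by nlinarith
  rw [le_div_iff₀ hα]
  rcases le_or_gt m 0 with hm0 | hm0
  · have h1 : n = 0 := le_antisymm (hnm.trans hm0) hn0
    have h2 : m = 0 := le_antisymm hm0 (h1 ▸ hnm)
    rw [h1, h2]; norm_num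
  · have hm1R : (1 : ℝ) ≤ (m : ℝ) := by exact_mod_cast hm0
    rcases le_or_gt n 0 with hn0' | hn1'
    · have h1 : n = 0 := le_antisymm hn0' hn0
      rw [h1]
      push_cast
      nlinarith [Hm, mul_nonneg hag.le (show (0:ℝ) ≤ (m:ℝ) - 1 by linarith)]
    · have hn1R : (1 : ℝ) ≤ (n : ℝ) := by exact_mod_cast hn1'
      rcases le_or_gt m 1 with hm2 | hm2
      · have h1 : m = 1 := le_antisymm hm2 hm0
        have h2 : n = 1 := le_antisymm (hnm.trans hm2) hn1'
        rw [h1, h2]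
        push_cast
        nlinarith [Hn]
      · have hm2R : (2 : ℝ) ≤ (m : ℝ) := by exact_mod_cast hm2
        rcases le_or_gt n 1 with hn2 | hn2
        · have h2 : n = 1 := le_antisymm hn2 hn1'
          rw [h2]
          push_cast
          nlinarith [Hm, mul_nonneg hag.le (show (0:ℝ) ≤ (m:ℝ) - 2 by linarith)]
        · have hn2R : (2 : ℝ) ≤ (n : ℝ) := by exact_mod_cast hn2
          nlinarith [Hm, Hn, mul_nonneg hag.le (show (0:ℝ) ≤ (m:ℝ) - 2 by linarith),
            mul_nonneg hbg.le (show (0:ℝ) ≤ (n:ℝ) - 2 by linarith),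
            mul_nonneg (show (0:ℝ) ≤ β*γ - 2*(α*γ) by linarith)
              (show (0:ℝ) ≤ (n:ℝ) by linarith)]

set_option maxHeartbeats 1000000 in
lemma bound2 (α β γ : ℝ) (hα : 0 < α) (hαβ : α < β) (h : β / 2 ≤ α) (hγ : 0 < γ) :
    (γ / 2) * ((⌊1 / (α * γ) + 1 / 2⌋ : ℤ) + (⌊1 / (β * γ) + 1 / 2⌋ : ℤ) : ℝ) ≤ 2 / β := by
  have hβ : 0 < β := hα.trans hαβ
  have hag : 0 < α * γ := mul_pos hα hγ
  have hbg : 0 < β * γ := mul_pos hβ hγ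
  set m := ⌊1 / (α * γ) + 1 / 2⌋ with hmdef
  set n := ⌊1 / (β * γ) + 1 / 2⌋ with hndef
  have hm1 : (m : ℝ) ≤ 1 / (α * γ) + 1 / 2 := Int.floor_le _
  have hn1 : (n : ℝ) ≤ 1 / (β * γ) + 1 / 2 := Int.floor_le _
  have hn0 : 0 ≤ n := Int.floor_nonneg.mpr (by positivity)
  have hnm : n ≤ m := by
    apply Int.floor_le_floor
    have : 1 / (β * γ) ≤ 1 / (α * γ) := by
      apply one_div_le_one_div_of_le hag; nlinarith
    linarith
  have e1 : (1 / (α * γ)) * (α * γ) = 1 := one_div_mul_cancel hag.ne'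
  have e2 : (1 / (β * γ)) * (β * γ) = 1 := one_div_mul_cancel hbg.ne'
  have Hm : (m : ℝ) * (α * γ) ≤ 1 + (α * γ) / 2 := by
    nlinarith [mul_le_mul_of_nonneg_right hm1 hag.le]
  have Hn : (n : ℝ) * (β * γ) ≤ 1 + (β * γ) / 2 := by
    nlinarith [mul_le_mul_of_nonneg_right hn1 hbg.le]
  have hd : β * γ ≤ 2 * (α * γ) := by nlinarith
  rw [le_div_iff₀ hβ]
  rcases le_or_gt m 0 with hm0 | hm0
  · have h1 : n = 0 := le_antisymm (hnm.trans hm0) hn0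
    have h2 : m = 0 := le_antisymm hm0 (h1 ▸ hnm)
    rw [h1, h2]; norm_num
  · have hm1R : (1 : ℝ) ≤ (m : ℝ) := by exact_mod_cast hm0
    rcases le_or_gt n 0 with hn0' | hn1'
    · have h1 : n = 0 := le_antisymm hn0' hn0
      rw [h1]
      push_cast
      nlinarith [Hm, mul_nonneg hag.le (show (0:ℝ) ≤ (m:ℝ) - 1 by linarith),
        mul_nonneg (show (0:ℝ) ≤ 2*(α*γ) - β*γ by linarith)
          (show (0:ℝ) ≤ (m:ℝ) by linarith)]
    · have hn1R : (1 : ℝ) ≤ (n : ℝ) := by exact_mod_cast hn1'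
      rcases le_or_gt m 1 with hm2 | hm2
      · have h1 : m = 1 := le_antisymm hm2 hm0
        have h2 : n = 1 := le_antisymm (hnm.trans hm2) hn1'
        rw [h1, h2]
        push_cast
        nlinarith [Hn]
      · have hm2R : (2 : ℝ) ≤ (m : ℝ) := by exact_mod_cast hm2
        rcases le_or_gt n 1 with hn2 | hn2
        · have h2 : n = 1 := le_antisymm hn2 hn1'
          rw [h2]
          push_cast
          nlinarith [Hm, mul_nonneg hag.le (show (0:ℝ) ≤ (m:ℝ) - 2 by linarith),
            mul_nonneg (show (0:ℝ) ≤ 2*(α*γ) - β*γ by linarith)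
              (show (0:ℝ) ≤ (m:ℝ) by linarith)]
        · have hn2R : (2 : ℝ) ≤ (n : ℝ) := by exact_mod_cast hn2
          have c1 : (m:ℝ) * (β*γ) ≤ (m:ℝ) * (2*(α*γ)) :=
            mul_le_mul_of_nonneg_left hd (by linarith)
          have c2 : α*γ ≤ 2/3 := by
            nlinarith [Hm, mul_nonneg hag.le (show (0:ℝ) ≤ (m:ℝ) - 2 by linarith)]
          have c3 : β*γ ≤ 2/3 := by
            nlinarith [Hn, mul_nonneg hbg.le (show (0:ℝ) ≤ (n:ℝ) - 2 by linarith)]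
          nlinarith [Hm, Hn, c1, c2, c3]

lemma attain1 (α β : ℝ) (hα : 0 < α) (hαβ : α < β) :
    ((2 / α) / 2) * ((⌊1 / (α * (2 / α)) + 1 / 2⌋ : ℤ)
      + (⌊1 / (β * (2 / α)) + 1 / 2⌋ : ℤ) : ℝ) = 1 / α := by
  have hβ : 0 < β := hα.trans hαβ
  have e1 : α * (2 / α) = 2 := by field_simp
  have f1 : ⌊1 / (α * (2 / α)) + 1 / 2⌋ = 1 := by
    rw [e1]
    norm_num
  have hb2 : 2 < β * (2 / α) := by
    rw [show β * (2 / α) = 2 * (β / α) by ring]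
    nlinarith [(one_lt_div hα).mpr hαβ]
  have f2 : ⌊1 / (β * (2 / α)) + 1 / 2⌋ = 0 := by
    rw [Int.floor_eq_zero_iff]
    constructor
    · positivity
    · have : 1 / (β * (2 / α)) < 1 / 2 :=
        one_div_lt_one_div_of_lt (by norm_num) hb2
      linarith
  rw [f1, f2]
  push_cast
  field_simp
  ring

lemma attain2 (α β : ℝ) (hα : 0 < α) (hαβ : α < β) (h : β / 2 ≤ α) :
    ((2 / β) / 2) * ((⌊1 / (α * (2 / β)) + 1 / 2⌋ : ℤ)
      + (⌊1 / (β * (2 / β)) + 1 / 2⌋ : ℤ) : ℝ) = 2 / β := by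
  have hβ : 0 < β := hα.trans hαβ
  have e1 : β * (2 / β) = 2 := by field_simp
  have f1 : ⌊1 / (β * (2 / β)) + 1 / 2⌋ = 1 := by
    rw [e1]; norm_num
  have hx1 : 1 ≤ α * (2 / β) := by
    rw [show α * (2 / β) = 2 * α / β by ring, le_div_iff₀ hβ]; linarith
  have hx2 : α * (2 / β) < 2 := by
    rw [show α * (2 / β) = 2 * α / β by ring, div_lt_iff₀ hβ]; linarith
  have hxpos : (0:ℝ) < α * (2 / β) := by linarith
  have f2 : ⌊1 / (α * (2 / β)) + 1 / 2⌋ = 1 := by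
    rw [Int.floor_eq_iff]
    constructor
    · have : 1 / 2 < 1 / (α * (2 / β)) :=
        by rw [lt_div_iff₀ hxpos]; linarith
      push_cast; linarith
    · have : 1 / (α * (2 / β)) ≤ 1 := by
        rw [div_le_one hxpos]; linarith
      push_cast; linarith
  rw [f1, f2]
  push_cast
  field_simp
  ring

/-- The largest homogenized velocity `1/a^γ = (γ/2)(⌊1/(αγ)+1/2⌋ + ⌊1/(βγ)+1/2⌋)`
over all critical regimes `γ > 0` equals `1/α` if `α ≤ β/2` (attained at `γ = 2/α`)
and `2/β` if `α ≥ β/2` (attained at `γ = 2/β`). -/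
theorem stmt_6 (α β : ℝ) (hα : 0 < α) (hαβ : α < β) :
    (α ≤ β / 2 →
      (∀ γ : ℝ, 0 < γ →
        (γ / 2) * ((⌊1 / (α * γ) + 1 / 2⌋ : ℤ) + (⌊1 / (β * γ) + 1 / 2⌋ : ℤ) : ℝ) ≤ 1 / α) ∧
      ((2 / α) / 2) * ((⌊1 / (α * (2 / α)) + 1 / 2⌋ : ℤ)
        + (⌊1 / (β * (2 / α)) + 1 / 2⌋ : ℤ) : ℝ) = 1 / α) ∧
    (β / 2 ≤ α →
      (∀ γ : ℝ, 0 < γ →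
        (γ / 2) * ((⌊1 / (α * γ) + 1 / 2⌋ : ℤ) + (⌊1 / (β * γ) + 1 / 2⌋ : ℤ) : ℝ) ≤ 2 / β) ∧
      ((2 / β) / 2) * ((⌊1 / (α * (2 / β)) + 1 / 2⌋ : ℤ)
        + (⌊1 / (β * (2 / β)) + 1 / 2⌋ : ℤ) : ℝ) = 2 / β) := by
  refine ⟨fun h => ⟨fun γ hγ => bound1 α β γ hα hαβ h hγ, attain1 α β hα hαβ⟩,
    fun h => ⟨fun γ hγ => bound2 α β γ hα hαβ h hγ, attain2 α β hα hαβ h⟩⟩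
end

section
/- Let γ, τ, a > 0 with ε = γτ, let Z_ε = 3εℤ ∪ ε(3ℤ + 1), let x ∈ Z_ε, and assume 1/a ∉ γ((ℤ + 1/2) ∪ (ℤ + 2)). Consider the minimizers over Z_ε of F(u) = −u + a(u − x)²/(2τ). Then: (i) if a > 2/γ, the unique minimizer is x; (ii) if 1/γ < a < 2/γ, the unique minimizer is x + ε when x + ε ∈ Z_ε, and is x when x + ε ∉ Z_ε; (iii) if a < 1/γ, every minimizer is strictly greater than x. -/
def Zlat (ε : ℝ) : Set ℝ := {u : ℝ | ∃ k : ℤ, u = 3 * ε * k ∨ u = ε * (3 * k + 1)}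

def minSet (ε τ a x : ℝ) : Set ℝ :=
  {y : ℝ | y ∈ Zlat ε ∧ ∀ u ∈ Zlat ε,
    -y + a * (y - x) ^ 2 / (2 * τ) ≤ -u + a * (u - x) ^ 2 / (2 * τ)}

/-!
Write a lattice point as `u = x + ε d`. Since `ε = γτ`, the objective becomes
`F(x + ε d) = F(x) + ε (b d²/2 - d)` with `b = aγ`, so minimizing `F` over `Z_ε` amounts to
minimizing the parabola `g(d) = b d²/2 - d` over the admissible integer offsets `d`, among which
are `0` and at least one of `1, 2`. On the integers, `g` has the unique minimum `0` at `d = 0` when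
`b > 2`; when `1 < b < 2` its unique minimum is at `d = 1`, and `d = 0` is the unique minimum among
the remaining offsets; when `b < 1` both `g(1)` and `g(2)` are negative while `g ≥ 0` for `d ≤ 0`.
-/

noncomputable def energy (τ a x u : ℝ) : ℝ := -u + a * (u - x) ^ 2 / (2 * τ)

noncomputable def reducedEnergy (b d : ℝ) : ℝ := b * d ^ 2 / 2 - d

section ReducedEnergy

variable {b : ℝ}

@[simp]
lemma reducedEnergy_zero : reducedEnergy b 0 = 0 := by
  simp [reducedEnergy]

lemma reducedEnergy_pos_of_one_lt (hb : 1 < b) {d : ℤ} (hd₀ : d ≠ 0) (hd₁ : d ≠ 1) :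
    0 < reducedEnergy b d := by
  unfold reducedEnergy
  rcases le_or_gt d 0 with h | h
  · have h' : (d : ℝ) ≤ -1 := by exact_mod_cast (by omega : d ≤ -1)
    nlinarith
  · have h' : (2 : ℝ) ≤ d := by exact_mod_cast (by omega : 2 ≤ d)
    nlinarith [mul_pos (sub_pos.mpr hb) (by positivity : (0 : ℝ) < d ^ 2),
      mul_nonneg (by linarith : (0 : ℝ) ≤ d) (sub_nonneg.mpr h')]

lemma reducedEnergy_pos_of_two_lt (hb : 2 < b) {d : ℤ} (hd : d ≠ 0) :
    0 < reducedEnergy b d := by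
  rcases eq_or_ne d 1 with rfl | hd₁
  · norm_num [reducedEnergy]
    linarith
  · exact reducedEnergy_pos_of_one_lt (by linarith) hd hd₁

lemma reducedEnergy_one_lt (hb : 2 / 3 < b) (hb' : b < 2) {d : ℤ} (hd : d ≠ 1) :
    reducedEnergy b 1 < reducedEnergy b d := by
  unfold reducedEnergy
  rcases le_or_gt d 0 with h | h
  · have h' : (d : ℝ) ≤ 0 := by exact_mod_cast h
    nlinarith
  · have h' : (2 : ℝ) ≤ d := by exact_mod_cast (by omega : 2 ≤ d)
    nlinarith [mul_pos (by linarith : (0 : ℝ) < d - 1) (by nlinarith : 0 < b * (d + 1) - 2)]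

lemma reducedEnergy_nonneg_of_nonpos (hb : 0 ≤ b) {d : ℝ} (hd : d ≤ 0) :
    0 ≤ reducedEnergy b d := by
  unfold reducedEnergy
  nlinarith [mul_nonneg hb (sq_nonneg d)]

lemma reducedEnergy_neg (hb : b < 1) {d : ℝ} (hd₀ : 0 < d) (hd₂ : d ≤ 2) :
    reducedEnergy b d < 0 := by
  have hbd : b * d < 2 := by
    rcases le_or_gt 0 b with h | h <;> nlinarith
  unfold reducedEnergy
  nlinarith [mul_pos hd₀ (sub_pos.mpr hbd)]

end ReducedEnergy

lemma mem_zlat_iff {ε u : ℝ} : u ∈ Zlat ε ↔ ∃ n : ℤ, n % 3 ≠ 2 ∧ u = ε * n := by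
  constructor
  · rintro ⟨k, rfl | rfl⟩
    · exact ⟨3 * k, by omega, by push_cast; ring⟩
    · exact ⟨3 * k + 1, by omega, by push_cast; ring⟩
  · rintro ⟨n, hn, rfl⟩
    obtain ⟨k, rfl | rfl⟩ : ∃ k : ℤ, n = 3 * k ∨ n = 3 * k + 1 := ⟨n / 3, by omega⟩
    · exact ⟨k, Or.inl (by push_cast; ring)⟩
    · exact ⟨k, Or.inr (by push_cast; ring)⟩

lemma mul_intCast_mem_zlat_iff {ε : ℝ} (hε : ε ≠ 0) {n : ℤ} : ε * n ∈ Zlat ε ↔ n % 3 ≠ 2 := by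
  refine ⟨fun h => ?_, fun hn => mem_zlat_iff.mpr ⟨n, hn, rfl⟩⟩
  obtain ⟨k, hk, hnk⟩ := mem_zlat_iff.mp h
  rw [mul_right_inj' hε, Int.cast_inj] at hnk
  rwa [hnk]

lemma minSet_eq_singleton {ε τ a x z : ℝ} (hz : z ∈ Zlat ε)
    (hlt : ∀ u ∈ Zlat ε, u ≠ z → energy τ a x z < energy τ a x u) :
    minSet ε τ a x = {z} := by
  ext y
  refine ⟨fun ⟨hy, hmin⟩ => ?_, ?_⟩
  · by_contra hne
    exact (hmin z hz).not_gt (hlt y hy hne)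
  · rintro rfl
    refine ⟨hz, fun u hu => ?_⟩
    rcases eq_or_ne u y with rfl | hne
    exacts [le_rfl, (hlt u hu hne).le]

section Lattice

variable {γ τ a ε : ℝ}

lemma energy_mul_intCast (hτ : τ ≠ 0) (hε : ε = γ * τ) (m n : ℤ) :
    energy τ a (ε * m) (ε * n) = -(ε * m) + ε * reducedEnergy (a * γ) (n - m : ℤ) := by
  subst hε
  unfold energy reducedEnergy
  push_cast
  field_simp
  ring

lemma energy_mul_intCast_le_iff (hγ : 0 < γ) (hτ : 0 < τ) (hε : ε = γ * τ) (m p n : ℤ) :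
    energy τ a (ε * m) (ε * p) ≤ energy τ a (ε * m) (ε * n) ↔
      reducedEnergy (a * γ) (p - m : ℤ) ≤ reducedEnergy (a * γ) (n - m : ℤ) := by
  rw [energy_mul_intCast hτ.ne' hε, energy_mul_intCast hτ.ne' hε, add_le_add_iff_left,
    mul_le_mul_iff_right₀ (hε ▸ mul_pos hγ hτ)]

lemma energy_mul_intCast_lt_iff (hγ : 0 < γ) (hτ : 0 < τ) (hε : ε = γ * τ) (m p n : ℤ) :
    energy τ a (ε * m) (ε * p) < energy τ a (ε * m) (ε * n) ↔
      reducedEnergy (a * γ) (p - m : ℤ) < reducedEnergy (a * γ) (n - m : ℤ) := by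
  simpa only [not_le] using (energy_mul_intCast_le_iff hγ hτ hε m n p).not

lemma minSet_eq_mul_intCast (hγ : 0 < γ) (hτ : 0 < τ) (hε : ε = γ * τ) {m z : ℤ}
    (hz : z % 3 ≠ 2)
    (hlt : ∀ n : ℤ, n % 3 ≠ 2 → n ≠ z →
      reducedEnergy (a * γ) (z - m : ℤ) < reducedEnergy (a * γ) (n - m : ℤ)) :
    minSet ε τ a (ε * m) = {ε * z} := by
  refine minSet_eq_singleton (mem_zlat_iff.mpr ⟨z, hz, rfl⟩) fun u hu hne => ?_
  obtain ⟨n, hn, rfl⟩ := mem_zlat_iff.mp hu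
  exact (energy_mul_intCast_lt_iff hγ hτ hε m z n).mpr (hlt n hn (by rintro rfl; exact hne rfl))

lemma lt_of_mem_minSet (hγ : 0 < γ) (hτ : 0 < τ) (ha : 0 < a) (hε : ε = γ * τ)
    (hb : a * γ < 1) {m : ℤ} (hm : m % 3 ≠ 2) {y : ℝ} (hy : y ∈ minSet ε τ a (ε * m)) :
    ε * m < y := by
  obtain ⟨hyZ, hmin⟩ := hy
  obtain ⟨p, -, rfl⟩ := mem_zlat_iff.mp hyZ
  -- one of the next two offsets is admissible, and both lower the energy below that of `x`
  obtain ⟨w, hw₀, hw₂, hw⟩ : ∃ w : ℤ, 0 < w ∧ w ≤ 2 ∧ (m + w) % 3 ≠ 2 := by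
    rcases (by omega : m % 3 = 0 ∨ m % 3 = 1) with h | h
    exacts [⟨1, by omega, by omega, by omega⟩, ⟨2, by omega, by omega, by omega⟩]
  have hle := (energy_mul_intCast_le_iff hγ hτ hε m p (m + w)).mp
    (hmin _ (mem_zlat_iff.mpr ⟨m + w, hw, rfl⟩))
  rw [add_sub_cancel_left] at hle
  have hneg : reducedEnergy (a * γ) (p - m : ℤ) < 0 :=
    hle.trans_lt (reducedEnergy_neg hb (by exact_mod_cast hw₀) (by exact_mod_cast hw₂))
  have hpm : m < p := by
    by_contra! h
    exact hneg.not_ge (reducedEnergy_nonneg_of_nonpos (mul_pos ha hγ).le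
      (by exact_mod_cast Int.sub_nonpos_of_le h))
  exact mul_lt_mul_of_pos_left (by exact_mod_cast hpm) (hε ▸ mul_pos hγ hτ)

end Lattice

theorem stmt_7_general (γ τ a ε : ℝ) (hγ : 0 < γ) (hτ : 0 < τ) (ha : 0 < a) (hε : ε = γ * τ)
    (x : ℝ) (hx : x ∈ Zlat ε) :
    ((2 / γ < a) → minSet ε τ a x = {x}) ∧
    ((1 / γ < a ∧ a < 2 / γ) →
      ((x + ε ∈ Zlat ε → minSet ε τ a x = {x + ε}) ∧
       (x + ε ∉ Zlat ε → minSet ε τ a x = {x}))) ∧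
    ((a < 1 / γ) → ∀ y ∈ minSet ε τ a x, x < y) := by
  obtain ⟨m, hm, rfl⟩ := mem_zlat_iff.mp hx
  simp only [div_lt_iff₀ hγ, lt_div_iff₀ hγ]
  have hstep : ε * m + ε = ε * (m + 1 : ℤ) := by push_cast; ring
  rw [hstep, mul_intCast_mem_zlat_iff (hε ▸ mul_pos hγ hτ).ne']
  refine ⟨fun hb => ?_, fun ⟨hb₁, hb₂⟩ => ⟨fun hm₁ => ?_, fun hm₁ => ?_⟩,
    fun hb _ => lt_of_mem_minSet hγ hτ ha hε hb hm⟩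
  · refine minSet_eq_mul_intCast hγ hτ hε hm fun n _ hn => ?_
    simpa using reducedEnergy_pos_of_two_lt hb (sub_ne_zero.mpr hn)
  · refine minSet_eq_mul_intCast hγ hτ hε hm₁ fun n _ hn => ?_
    simpa using reducedEnergy_one_lt (by linarith) hb₂ (d := n - m) (by omega)
  · refine minSet_eq_mul_intCast hγ hτ hε hm fun n hn hnm => ?_
    simpa using reducedEnergy_pos_of_one_lt hb₁ (d := n - m) (by omega) (by omega)

/-- One-step analysis on `Z_ε = 3εℤ ∪ ε(3ℤ+1)` with `ε = γτ`: total pinning for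
`a > 2/γ`, partial pinning for `1/γ < a < 2/γ`, and strict advance for `a < 1/γ`. -/
theorem stmt_7 (γ τ a ε : ℝ) (hγ : 0 < γ) (hτ : 0 < τ) (ha : 0 < a) (hε : ε = γ * τ)
    (x : ℝ) (hx : x ∈ Zlat ε)
    (hna : ¬ ∃ k : ℤ, 1 / a = γ * ((k : ℝ) + 1 / 2) ∨ 1 / a = γ * ((k : ℝ) + 2)) :
    ((2 / γ < a) → minSet ε τ a x = {x}) ∧
    ((1 / γ < a ∧ a < 2 / γ) →
      ((x + ε ∈ Zlat ε → minSet ε τ a x = {x + ε}) ∧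
       (x + ε ∉ Zlat ε → minSet ε τ a x = {x}))) ∧
    ((a < 1 / γ) → ∀ y ∈ minSet ε τ a x, x < y) :=
  stmt_7_general γ τ a ε hγ hτ ha hε x hx
end

section
/- Let W : ℝ → ℝ be a C¹, 1-periodic, even function with Lipschitz derivative, ‖W'‖_∞ = 1 and zero average. Let γ > 0, S ≥ T > 0, let (a_n)_{n≥1} be positive reals, and let y₀, z₀ ∈ ℝ with z₀ ≤ y₀. Let (y_n) satisfy y_n ∈ argmin_{t∈ℝ} {W(t) + Tt + a_n(γ/2)(t − y_{n−1})²} and (z_n) satisfy z_n ∈ argmin_{t∈ℝ} {W(t) + St + a_n(γ/2)(t − z_{n−1})²}, and assume each of these minimization problems has a unique minimizer. Then z_n ≤ y_n for every n ≥ 1. -/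
open MeasureTheory

/-- Monotone behavior with respect to initial data (Proposition 4.2, perturbed case):
if `(y_n)` solves the rescaled scheme for `W(t) + Tt` from `y₀` and `(z_n)` solves
it for `W(t) + St` from `z₀` with `S ≥ T` and `z₀ ≤ y₀` (unique minimizers at each
step), then `z_n ≤ y_n` for all `n ≥ 1`. -/
theorem stmt_10 (W : ℝ → ℝ)
    (hWC1 : ContDiff ℝ 1 W)
    (hWper : Function.Periodic W 1)
    (hWeven : ∀ s : ℝ, W (-s) = W s)
    (hWlip : ∃ L : NNReal, LipschitzWith L (deriv W))
    (hWnorm : sSup (Set.range fun s : ℝ => |deriv W s|) = 1)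
    (hWavg : ∫ s in (0:ℝ)..1, W s = 0)
    (γ : ℝ) (hγ : 0 < γ) (S T : ℝ) (hT : 0 < T) (hTS : T ≤ S)
    (a : ℕ → ℝ) (ha : ∀ n, 1 ≤ n → 0 < a n)
    (y z : ℕ → ℝ) (hz0 : z 0 ≤ y 0)
    (hy : ∀ n, 1 ≤ n → ∀ t : ℝ,
      W (y n) + T * y n + a n * (γ / 2) * (y n - y (n - 1)) ^ 2 ≤
        W t + T * t + a n * (γ / 2) * (t - y (n - 1)) ^ 2)
    (hyu : ∀ n, 1 ≤ n → ∀ t : ℝ,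
      (∀ s : ℝ, W t + T * t + a n * (γ / 2) * (t - y (n - 1)) ^ 2 ≤
        W s + T * s + a n * (γ / 2) * (s - y (n - 1)) ^ 2) → t = y n)
    (hz : ∀ n, 1 ≤ n → ∀ t : ℝ,
      W (z n) + S * z n + a n * (γ / 2) * (z n - z (n - 1)) ^ 2 ≤
        W t + S * t + a n * (γ / 2) * (t - z (n - 1)) ^ 2)
    (hzu : ∀ n, 1 ≤ n → ∀ t : ℝ,
      (∀ s : ℝ, W t + S * t + a n * (γ / 2) * (t - z (n - 1)) ^ 2 ≤
        W s + S * s + a n * (γ / 2) * (s - z (n - 1)) ^ 2) → t = z n) :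
    ∀ n, 1 ≤ n → z n ≤ y n := by
  have key : ∀ n, z n ≤ y n := by
    intro n
    induction n with
    | zero => exact hz0
    | succ n ih =>
      by_contra hcon
      push_neg at hcon
      have h1 := hy (n + 1) (by omega) (z (n + 1))
      have h2 := hz (n + 1) (by omega) (y (n + 1))
      simp only [Nat.add_sub_cancel] at h1 h2
      have han := ha (n + 1) (by omega)
      have hA : 0 < a (n + 1) * (γ / 2) := by positivity
      have hST : S = T := by nlinarith [mul_pos hA (sub_pos.mpr hcon)]
      have hZY : z n = y n := by
        have : y n ≤ z n := by nlinarith [mul_pos hA (sub_pos.mpr hcon)]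
        linarith
      have := hyu (n + 1) (by omega) (z (n + 1))
      simp only [Nat.add_sub_cancel] at this
      have heq : z (n + 1) = y (n + 1) := by
        apply this
        intro s
        have := hz (n + 1) (by omega) s
        simp only [Nat.add_sub_cancel] at this
        rw [hST, hZY] at this
        exact this
      linarith [heq ▸ hcon]
  exact fun n _ => key n
end

section
/- Let W : ℝ → ℝ be 1-periodic and continuous, T > 0, γ > 0, let (a_n)_{n≥1} be positive reals, and let (y_n)_{n≥0} satisfy y_n ∈ argmin_{t∈ℝ} {W(t) + Tt + a_n(γ/2)(t − y_{n−1})²} for all n ≥ 1. Then y_{n+k} ≤ y_{n−1} + 1 for every n ≥ 1 and every k ≥ 0; that is, once the orbit lies in an energy well it never rises more than one period above a previous position. -/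
/-- Once the orbit of the rescaled scheme reaches a position, it never rises more
than one period above it: `y_{n+k} ≤ y_{n-1} + 1` for all `n ≥ 1`, `k ≥ 0`
(stated with `n - 1` replaced by `n` and `n + k` by `n + 1 + k`). -/
theorem stmt_12 (W : ℝ → ℝ) (hWper : Function.Periodic W 1) (hWcont : Continuous W)
    (T γ : ℝ) (hT : 0 < T) (hγ : 0 < γ)
    (a : ℕ → ℝ) (ha : ∀ n, 1 ≤ n → 0 < a n)
    (y : ℕ → ℝ)
    (hy : ∀ n, 1 ≤ n → ∀ t : ℝ,
      W (y n) + T * y n + a n * (γ / 2) * (y n - y (n - 1)) ^ 2 ≤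
        W t + T * t + a n * (γ / 2) * (t - y (n - 1)) ^ 2) :
    ∀ n k : ℕ, y (n + 1 + k) ≤ y n + 1 := by
  -- one-step energy decrease
  have hstep : ∀ i : ℕ, 1 ≤ i → W (y i) + T * y i ≤ W (y (i - 1)) + T * y (i - 1) := by
    intro i hi
    have h := hy i hi (y (i - 1))
    have hc : 0 < a i * (γ / 2) := by
      have := ha i hi
      positivity
    nlinarith [sq_nonneg (y i - y (i - 1))]
  -- energy decrease chain
  have hchain : ∀ p q : ℕ, 1 ≤ p → p ≤ q → W (y q) + T * y q ≤ W (y p) + T * y p := by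
    intro p q hp hpq
    induction q with
    | zero => omega
    | succ q ih =>
      rcases Nat.lt_or_ge p (q + 1) with h | h
      · have h1 := ih (by omega)
        have h2 := hstep (q + 1) (by omega)
        simp only [Nat.add_sub_cancel] at h2
        linarith
      · have hpq' : p = q + 1 := by omega
        subst hpq'
        exact le_rfl
  -- crossing index lemma
  have hcross : ∀ (z : ℝ) (j M : ℕ), j ≤ M → y j ≤ z → z < y M →
      ∃ i, j ≤ i ∧ i < M ∧ y i ≤ z ∧ z < y (i + 1) := by
    intro z j M
    induction M with
    | zero =>
      intro hj h1 h2
      interval_cases j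
      linarith
    | succ M ih =>
      intro hj h1 h2
      have hjM : j ≤ M := by
        rcases Nat.lt_or_ge j (M + 1) with h | h
        · omega
        · exfalso
          have : j = M + 1 := by omega
          subst this
          linarith
      rcases le_or_gt (y M) z with h | h
      · exact ⟨M, hjM, Nat.lt_succ_self M, h, h2⟩
      · obtain ⟨i, hi1, hi2, hi3, hi4⟩ := ih hjM h1 h
        exact ⟨i, hi1, by omega, hi3, hi4⟩
  intro n k
  by_contra hcon
  push_neg at hcon
  set m := n + 1 + k with hm
  set z : ℝ := y m - 1 with hz
  have hzn : y n ≤ z := by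
    simp only [hz]
    linarith
  have hzm : z < y m := by
    simp only [hz]
    linarith
  obtain ⟨i, hni, him, hiz, hiz'⟩ := hcross z n m (by omega) hzn hzm
  -- minimality at step i+1 against competitor z
  have hmin := hy (i + 1) (by omega) z
  simp only [Nat.add_sub_cancel] at hmin
  have hc : (0:ℝ) ≤ a (i + 1) * (γ / 2) := by
    have := ha (i + 1) (by omega)
    positivity
  have hsq : (z - y i) ^ 2 ≤ (y (i + 1) - y i) ^ 2 := by nlinarith
  have hsq' : a (i + 1) * (γ / 2) * (z - y i) ^ 2 ≤
      a (i + 1) * (γ / 2) * (y (i + 1) - y i) ^ 2 :=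
    mul_le_mul_of_nonneg_left hsq hc
  have h1 : W (y (i + 1)) + T * y (i + 1) ≤ W z + T * z := by nlinarith [hmin, hsq']
  have h2 := hchain (i + 1) m (by omega) (by omega)
  have hWp : W (y m) = W z := by
    have h := hWper z
    have : z + 1 = y m := by simp [hz]
    rw [this] at h
    exact h
  have hTz : T * z = T * y m - T := by
    simp only [hz]; ring
  linarith
end

section
/- Let (S,d) be a metric space, φ : S → ℝ a function, τ > 0, and (a_n)_{n≥1} positive reals. Let (u_n)_{n≥0} in S satisfy u_n ∈ argmin_{u∈S} {φ(u) + a_n d(u, u_{n−1})²/(2τ)} for all n ≥ 1. Then for all integers 0 ≤ m < n, d(u_n, u_m)² ≤ 2(φ(u_m) − φ(u_n)) · Σ_{k=m+1}^{n} τ/a_k. -/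
open Finset

/-!
The minimality of `u n` tested against the previous point `u (n - 1)` gives the one-step bound
`d(u_k, u_{k-1})² ≤ (τ / a_k) · 2(φ(u_{k-1}) - φ(u_k))`; in particular `φ ∘ u` is nonincreasing.
Summing the triangle inequality along the orbit and applying Cauchy–Schwarz in Sedrakyan's form
`(∑ dₖ)² / ∑ wₖ ≤ ∑ dₖ² / wₖ` turns these into the global bound, the energy differences telescoping.
-/

/-- `x` is a step of the perturbed Euler scheme from the previous point `y`. -/
def IsEulerStep {S : Type*} [PseudoMetricSpace S] (φ : S → ℝ) (τ a : ℝ) (y x : S) : Prop :=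
  ∀ v : S, φ x + a * dist x y ^ 2 / (2 * τ) ≤ φ v + a * dist v y ^ 2 / (2 * τ)

theorem IsEulerStep.dist_sq_le {S : Type*} [PseudoMetricSpace S] {φ : S → ℝ} {τ a : ℝ}
    {x y : S} (hstep : IsEulerStep φ τ a y x) (hτ : 0 < τ) (ha : 0 < a) :
    dist x y ^ 2 ≤ τ / a * (2 * φ y - 2 * φ x) := by
  have hy := hstep y
  rw [dist_self, zero_pow two_ne_zero, mul_zero, zero_div, add_zero] at hy
  have hdecay : a * dist x y ^ 2 ≤ (φ y - φ x) * (2 * τ) :=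
    (div_le_iff₀ (by positivity)).1 (by linarith)
  rw [div_mul_eq_mul_div, le_div_iff₀ ha]
  linarith

theorem dist_sq_le_sum_mul_of_dist_sq_le {S : Type*} [PseudoMetricSpace S] (x : ℕ → S)
    (w f : ℕ → ℝ) {m n : ℕ} (hmn : m ≤ n) (hw : ∀ i ∈ Ico m n, 0 < w i)
    (hstep : ∀ i ∈ Ico m n, dist (x i) (x (i + 1)) ^ 2 ≤ w i * (f i - f (i + 1))) :
    dist (x m) (x n) ^ 2 ≤ (∑ i ∈ Ico m n, w i) * (f m - f n) := by
  rcases hmn.eq_or_lt with rfl | hlt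
  · simp
  have hW : 0 < ∑ i ∈ Ico m n, w i := sum_pos hw (nonempty_Ico.2 hlt)
  have htelescope : ∑ i ∈ Ico m n, (f i - f (i + 1)) = f m - f n := by
    have := sum_Ico_sub (-f) hmn
    simpa only [Pi.neg_apply, neg_sub_neg] using this
  have hsedrakyan : (∑ i ∈ Ico m n, dist (x i) (x (i + 1))) ^ 2 / ∑ i ∈ Ico m n, w i
      ≤ f m - f n :=
    calc _ ≤ ∑ i ∈ Ico m n, dist (x i) (x (i + 1)) ^ 2 / w i := sq_sum_div_le_sum_sq_div _ _ hw
      _ ≤ ∑ i ∈ Ico m n, (f i - f (i + 1)) :=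
        sum_le_sum fun i hi => (div_le_iff₀' (hw i hi)).2 (hstep i hi)
      _ = f m - f n := htelescope
  calc dist (x m) (x n) ^ 2 ≤ (∑ i ∈ Ico m n, dist (x i) (x (i + 1))) ^ 2 :=
        pow_le_pow_left₀ dist_nonneg (dist_le_Ico_sum_dist x hmn) 2
    _ ≤ (∑ i ∈ Ico m n, w i) * (f m - f n) := by
        rw [mul_comm]
        exact (div_le_iff₀ hW).1 hsedrakyan

/-- Hölder-type equicontinuity estimate for discrete orbits of the perturbed Euler
scheme: for `m < n`, `d(u_n, u_m)² ≤ 2(φ(u_m) - φ(u_n)) Σ_{k=m+1}^n τ/a_k`. -/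
theorem stmt_19 {S : Type*} [MetricSpace S] (φ : S → ℝ) (τ : ℝ) (hτ : 0 < τ)
    (a : ℕ → ℝ) (ha : ∀ n : ℕ, 1 ≤ n → 0 < a n) (u : ℕ → S)
    (hmin : ∀ n : ℕ, 1 ≤ n → ∀ v : S,
      φ (u n) + a n * dist (u n) (u (n - 1)) ^ 2 / (2 * τ) ≤
        φ v + a n * dist v (u (n - 1)) ^ 2 / (2 * τ)) :
    ∀ m n : ℕ, m < n →
      dist (u n) (u m) ^ 2 ≤
        2 * (φ (u m) - φ (u n)) * ∑ k ∈ Finset.Icc (m + 1) n, τ / a k := by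
  intro m n hmn
  have hstep : ∀ i ∈ Ico m n,
      dist (u i) (u (i + 1)) ^ 2 ≤ τ / a (i + 1) * (2 * φ (u i) - 2 * φ (u (i + 1))) :=
    fun i _ => by
      simpa only [dist_comm, Nat.add_sub_cancel] using
        IsEulerStep.dist_sq_le (hmin (i + 1) (Nat.le_add_left 1 i)) hτ (ha _ (Nat.le_add_left 1 i))
  have hbound := dist_sq_le_sum_mul_of_dist_sq_le u (fun i => τ / a (i + 1))
    (fun i => 2 * φ (u i)) hmn.le (fun i _ => div_pos hτ (ha _ (Nat.le_add_left 1 i))) hstep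
  rw [sum_Ico_add' (fun k => τ / a k), Ico_add_one_right_eq_Icc, dist_comm] at hbound
  linarith
end
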